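/- arXiv:2602.10760 — 3 statements merged into one kernel-verified Lean document; each statement's English description precedes it below -/
import Mathlib

section
/- For vectors u, v in a real inner product space and any real r ≥ 2, there exists a constant c_r depending only on r such that ‖u+v‖^r − ‖u‖^r ≤ r⟨u,v⟩‖u‖^(r−2) + c_r(‖v‖^r + ‖v‖²‖u‖^(r−2)). -/
/-!
If `‖v‖ ≥ ‖u‖`, every term is `O(‖v‖ ^ r)`. Otherwise put `p = r / 2`, `x = ‖u + v‖ ^ 2` and
`y = ‖u‖ ^ 2`, so that `‖u + v‖ ^ r - ‖u‖ ^ r = x ^ p - y ^ p` and `x - y = 2 ⟪u, v⟫ + ‖v‖ ^ 2`.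
Since `x ≤ 4 y`, the scalar second-order bound
`x ^ p - y ^ p - p y ^ (p - 1) (x - y) ≤ C y ^ (p - 2) (x - y) ^ 2`, which follows from convexity
of `x ^ p` and bounded chord slopes of `x ^ (p - 1)`, applies, and `|x - y| ≤ 3 ‖u‖ ‖v‖` turns
its right-hand side into `O(‖v‖ ^ 2 ‖u‖ ^ (r - 2))`.
-/

open Real Set

lemma rpow_add_mul_rpow_sub_one_mul_sub_le {p t : ℝ} (hp : 1 ≤ p) (ht : 0 < t) :
    t ^ p + p * t ^ (p - 1) * (1 - t) ≤ 1 := by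
  have bernoulli := one_add_mul_self_le_rpow_one_add (s := t⁻¹ - 1)
    (by linarith [inv_pos.2 ht]) hp
  rw [add_sub_cancel, inv_rpow ht.le] at bernoulli
  have htp : 0 < t ^ p := rpow_pos_of_pos ht p
  calc t ^ p + p * t ^ (p - 1) * (1 - t) = t ^ p * (1 + p * (t⁻¹ - 1)) := by
        rw [rpow_sub_one ht.ne']; field_simp
    _ ≤ t ^ p * (t ^ p)⁻¹ := by gcongr
    _ = 1 := mul_inv_cancel₀ htp.ne'

/-- The chord slope of `x ^ q` from `1` to `t` is at most the one from `1` to `T` if `1 ≤ q`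
(convexity), and at most the one from `1` to `0` if `q ≤ 1` (concavity). -/
lemma rpow_sub_one_mul_sub_one_le {q t T : ℝ} (hq : 0 ≤ q) (ht : 0 ≤ t) (htT : t ≤ T)
    (hT : 2 ≤ T) : (t ^ q - 1) * (t - 1) ≤ T ^ q * (t - 1) ^ 2 := by
  rcases eq_or_ne t 1 with rfl | ht1
  · simp
  suffices slope_le : (t ^ q - 1) / (t - 1) ≤ T ^ q by
    calc (t ^ q - 1) * (t - 1) = (t ^ q - 1) / (t - 1) * (t - 1) ^ 2 := by
          field_simp [sub_ne_zero.2 ht1]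
      _ ≤ T ^ q * (t - 1) ^ 2 := by gcongr
  have one_le : 1 ≤ T ^ q := one_le_rpow (by linarith) hq
  rcases le_total 1 q with hq1 | hq1
  · calc (t ^ q - 1) / (t - 1) = (t ^ q - 1 ^ q) / (t - 1) := by rw [one_rpow]
      _ ≤ (T ^ q - 1 ^ q) / (T - 1) :=
        (convexOn_rpow hq1).secant_mono (mem_Ici.2 zero_le_one) (mem_Ici.2 ht)
          (mem_Ici.2 (by linarith)) ht1 (by linarith) htT
      _ ≤ T ^ q := by
        rw [one_rpow]
        exact (div_le_self (by linarith) (by linarith)).trans (by linarith)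
  · have slopes := (concaveOn_rpow hq hq1).neg.secant_mono (mem_Ici.2 zero_le_one)
      (mem_Ici.2 le_rfl) (mem_Ici.2 ht) zero_ne_one ht1 ht
    have h0 : 0 ≤ (0 : ℝ) ^ q := rpow_nonneg le_rfl q
    simp only [Pi.neg_apply, one_rpow, zero_sub, div_neg, div_one, neg_sub_neg] at slopes
    rw [show (1 - t ^ q) / (t - 1) = -((t ^ q - 1) / (t - 1)) by ring] at slopes
    linarith

lemma rpow_sub_one_sub_mul_sub_one_le {p t T : ℝ} (hp : 1 ≤ p) (ht : 0 < t) (htT : t ≤ T)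
    (hT : 2 ≤ T) : t ^ p - 1 - p * (t - 1) ≤ p * T ^ (p - 1) * (t - 1) ^ 2 := by
  have tangent := rpow_add_mul_rpow_sub_one_mul_sub_le hp ht
  have slope := rpow_sub_one_mul_sub_one_le (by linarith : 0 ≤ p - 1) ht.le htT hT
  nlinarith

lemma rpow_sub_rpow_sub_mul_le {p x y T : ℝ} (hp : 1 ≤ p) (hx : 0 < x) (hy : 0 < y)
    (hxy : x ≤ T * y) (hT : 2 ≤ T) :
    x ^ p - y ^ p - p * y ^ (p - 1) * (x - y) ≤
      p * T ^ (p - 1) * y ^ (p - 1) * ((x - y) ^ 2 / y) := by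
  have key := mul_le_mul_of_nonneg_left
    (rpow_sub_one_sub_mul_sub_one_le hp (div_pos hx hy) ((div_le_iff₀ hy).2 hxy) hT)
    (rpow_nonneg hy.le p)
  have hy_pow : 0 < y ^ p := rpow_pos_of_pos hy p
  rw [div_rpow hx.le hy.le] at key
  rw [rpow_sub_one hy.ne']
  calc x ^ p - y ^ p - p * (y ^ p / y) * (x - y)
      _ = y ^ p * (x ^ p / y ^ p - 1 - p * (x / y - 1)) := by field_simp
      _ ≤ y ^ p * (p * T ^ (p - 1) * (x / y - 1) ^ 2) := key
      _ = p * T ^ (p - 1) * (y ^ p / y) * ((x - y) ^ 2 / y) := by field_simp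

lemma sq_rpow_div_two {a : ℝ} (ha : 0 ≤ a) (r : ℝ) : (a ^ 2) ^ (r / 2) = a ^ r := by
  rw [← rpow_natCast_mul ha]
  ring_nf

section

variable {E : Type*} [NormedAddCommGroup E] [InnerProductSpace ℝ E]

lemma norm_add_rpow_sub_le_of_norm_le {r : ℝ} (hr : 1 < r) {u v : E} (huv : ‖u‖ ≤ ‖v‖) :
    ‖u + v‖ ^ r - ‖u‖ ^ r ≤ r * inner ℝ u v * ‖u‖ ^ (r - 2) + (2 ^ r + r) * ‖v‖ ^ r := by
  have hu := norm_nonneg u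
  have hv := norm_nonneg v
  have sum_le : ‖u + v‖ ^ r ≤ 2 ^ r * ‖v‖ ^ r := by
    rw [← mul_rpow zero_le_two hv]
    gcongr
    linarith [norm_add_le u v]
  have inner_ge : -(r * ‖v‖ ^ r) ≤ r * inner ℝ u v * ‖u‖ ^ (r - 2) := by
    have h1 : ‖u‖ * ‖u‖ ^ (r - 2) = ‖u‖ ^ (r - 1) := by
      rw [← rpow_one_add' hu (by linarith)]; ring_nf
    have h2 : ‖v‖ * ‖v‖ ^ (r - 1) = ‖v‖ ^ r := by
      rw [← rpow_one_add' hv (by linarith)]; ring_nf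
    have h3 : ‖u‖ ^ (r - 1) ≤ ‖v‖ ^ (r - 1) := by gcongr
    have h4 : -(‖u‖ * ‖v‖) ≤ inner ℝ u v := neg_le_of_abs_le (abs_real_inner_le_norm u v)
    calc -(r * ‖v‖ ^ r) ≤ -(r * (‖v‖ * ‖u‖ ^ (r - 1))) := by
          rw [← h2]; gcongr
      _ = r * (-(‖u‖ * ‖v‖)) * ‖u‖ ^ (r - 2) := by rw [← h1]; ring
      _ ≤ r * inner ℝ u v * ‖u‖ ^ (r - 2) := by gcongr
  nlinarith [rpow_nonneg hu r]

lemma norm_add_rpow_sub_le_of_norm_lt {r : ℝ} (hr : 2 ≤ r) {u v : E} (huv : ‖v‖ < ‖u‖) :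
    ‖u + v‖ ^ r - ‖u‖ ^ r ≤
      r * inner ℝ u v * ‖u‖ ^ (r - 2) +
        r / 2 * (1 + 9 * 4 ^ ((r - 2) / 2)) * (‖v‖ ^ 2 * ‖u‖ ^ (r - 2)) := by
  have hu : 0 < ‖u‖ := (norm_nonneg v).trans_lt huv
  have lower : ‖u‖ - ‖v‖ ≤ ‖u + v‖ := by linarith [norm_le_add_norm_add u v]
  have upper : ‖u + v‖ ≤ ‖u‖ + ‖v‖ := norm_add_le u v
  have diff : ‖u + v‖ ^ 2 - ‖u‖ ^ 2 = 2 * inner ℝ u v + ‖v‖ ^ 2 := by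
    rw [norm_add_sq_real]; ring
  have sq_diff : (2 * inner ℝ u v + ‖v‖ ^ 2) ^ 2 / ‖u‖ ^ 2 ≤ 9 * ‖v‖ ^ 2 := by
    rw [div_le_iff₀ (by positivity)]
    have inner_bounds := abs_le.1 (abs_real_inner_le_norm u v)
    have sq_bound := sq_le_sq' (a := 2 * inner ℝ u v + ‖v‖ ^ 2) (b := 3 * (‖v‖ * ‖u‖))
      (by nlinarith [norm_nonneg v]) (by nlinarith [norm_nonneg v])
    linarith
  have key := rpow_sub_rpow_sub_mul_le (p := r / 2) (x := ‖u + v‖ ^ 2) (y := ‖u‖ ^ 2) (T := 4)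
    (by linarith) (by nlinarith) (by positivity) (by nlinarith [norm_nonneg v]) (by norm_num)
  rw [show r / 2 - 1 = (r - 2) / 2 by ring, sq_rpow_div_two (norm_nonneg _),
    sq_rpow_div_two hu.le, sq_rpow_div_two hu.le] at key
  have hK : 0 ≤ r / 2 * 4 ^ ((r - 2) / 2) * ‖u‖ ^ (r - 2) := by positivity
  rw [diff] at key
  nlinarith [mul_le_mul_of_nonneg_left sq_diff hK]

end

theorem stmt_0 {E : Type*} [NormedAddCommGroup E] [InnerProductSpace ℝ E]
    (r : ℝ) (hr : 2 ≤ r) :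
    ∃ c : ℝ, 0 < c ∧ ∀ u v : E,
      ‖u + v‖ ^ r - ‖u‖ ^ r ≤
        r * (inner ℝ u v : ℝ) * ‖u‖ ^ (r - 2)
          + c * (‖v‖ ^ r + ‖v‖ ^ 2 * ‖u‖ ^ (r - 2)) := by
  have hL : 0 ≤ 2 ^ r + r := by positivity
  have hK : 0 ≤ r / 2 * (1 + 9 * (4 : ℝ) ^ ((r - 2) / 2)) := by positivity
  refine ⟨2 ^ r + r + r / 2 * (1 + 9 * 4 ^ ((r - 2) / 2)), by positivity, fun u v => ?_⟩
  have hv : 0 ≤ ‖v‖ ^ r := by positivity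
  have huv : 0 ≤ ‖v‖ ^ 2 * ‖u‖ ^ (r - 2) := by positivity
  rcases le_or_gt ‖u‖ ‖v‖ with h | h
  · have := norm_add_rpow_sub_le_of_norm_le (by linarith : 1 < r) h
    nlinarith [mul_nonneg hL huv, mul_nonneg hK (add_nonneg hv huv)]
  · have := norm_add_rpow_sub_le_of_norm_lt hr h
    nlinarith [mul_nonneg hK hv, mul_nonneg hL (add_nonneg hv huv)]
end

section
/- Let φ be a random vector in ℝ^q with E[‖φ‖²] < ∞ and Σ = E[φᵀφ] non-singular. Define ℏ(x) = E[min(|⟨x,φ⟩|², |⟨x,φ⟩|)]. Then there exists λ₂ > 0 such that ℏ(x) ≥ λ₂ · min(‖x‖², ‖x‖) for all x ∈ ℝ^q. -/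
/-!
Write `ψ(t) = min (t², t)` for `t ≥ 0`, so that `ℏ(x) = E[ψ |⟨x, φ⟩|]`. Since `ψ(r a) ≥ ψ(r) ψ(a)`,
scaling gives `ℏ(r u) ≥ ψ(r) ℏ(u)`, and it suffices to bound `ℏ` below on the unit sphere.
There `ℏ` is continuous (dominated convergence with bound `‖φ‖²`) and positive: `ℏ(u) = 0` forces
`⟨u, φ⟩ = 0` almost surely, hence `Σ u = E[φ ⟨u, φ⟩] = 0`, impossible for `Σ` non-singular and `u ≠ 0`.
By compactness the minimum of `ℏ` on the sphere is the required `λ₂`.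
-/

open MeasureTheory Matrix
open scoped RealInnerProductSpace

noncomputable def minSq (a : ℝ) : ℝ := min (a ^ 2) a

lemma minSq_nonneg {a : ℝ} (ha : 0 ≤ a) : 0 ≤ minSq a := le_min (sq_nonneg a) ha

lemma minSq_pos {a : ℝ} (ha : 0 < a) : 0 < minSq a := lt_min (pow_pos ha 2) ha

lemma minSq_le_sq (a : ℝ) : minSq a ≤ a ^ 2 := min_le_left _ _

lemma continuous_minSq : Continuous minSq := (continuous_pow 2).min continuous_id

lemma minSq_mul_minSq_le {r a : ℝ} (hr : 0 ≤ r) (ha : 0 ≤ a) :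
    minSq r * minSq a ≤ minSq (r * a) :=
  le_min
    (by
      rw [mul_pow]
      exact mul_le_mul (minSq_le_sq r) (minSq_le_sq a) (minSq_nonneg ha) (sq_nonneg r))
    (mul_le_mul (min_le_right _ _) (min_le_right _ _) (minSq_nonneg ha) hr)

section Moment

variable {Ω E : Type*} [MeasurableSpace Ω] {μ : Measure Ω}
  [NormedAddCommGroup E] [InnerProductSpace ℝ E] {φ : Ω → E}

/-- The paper's `ℏ`. -/
noncomputable def minSqMoment (μ : Measure Ω) (φ : Ω → E) (x : E) : ℝ :=
  ∫ ω, minSq |⟪x, φ ω⟫| ∂μ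

lemma minSq_abs_inner_le (x y : E) : minSq |⟪x, y⟫| ≤ ‖x‖ ^ 2 * ‖y‖ ^ 2 := by
  rw [← mul_pow]
  exact (minSq_le_sq _).trans
    (pow_le_pow_left₀ (abs_nonneg _) (abs_real_inner_le_norm x y) 2)

lemma integrable_minSq_abs_inner (hφ : MemLp φ 2 μ) (x : E) :
    Integrable (fun ω => minSq |⟪x, φ ω⟫|) μ := by
  refine ((hφ.integrable_norm_pow two_ne_zero).const_mul (‖x‖ ^ 2)).mono'
    ((continuous_minSq.comp (continuous_const.inner continuous_id).abs).comp_aestronglyMeasurable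
      hφ.1) (ae_of_all _ fun ω => ?_)
  rw [Real.norm_of_nonneg (minSq_nonneg (abs_nonneg _))]
  exact minSq_abs_inner_le x (φ ω)

lemma minSqMoment_nonneg (x : E) : 0 ≤ minSqMoment μ φ x :=
  integral_nonneg fun _ => minSq_nonneg (abs_nonneg _)

lemma continuousOn_minSqMoment (hφ : MemLp φ 2 μ) (R : ℝ) :
    ContinuousOn (minSqMoment μ φ) (Metric.closedBall 0 R) := by
  refine continuousOn_of_dominated (bound := fun ω => R ^ 2 * ‖φ ω‖ ^ 2)
    (fun x _ => (integrable_minSq_abs_inner hφ x).1) (fun x hx => ae_of_all _ fun ω => ?_)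
    ((hφ.integrable_norm_pow two_ne_zero).const_mul _)
    (ae_of_all _ fun ω =>
      (continuous_minSq.comp (continuous_id.inner continuous_const).abs).continuousOn)
  rw [Real.norm_of_nonneg (minSq_nonneg (abs_nonneg _))]
  have hx : ‖x‖ ≤ R := mem_closedBall_zero_iff.mp hx
  exact (minSq_abs_inner_le x (φ ω)).trans (by gcongr)

lemma minSqMoment_pos (hφ : MemLp φ 2 μ) {u : E} (hu : ¬ ∀ᵐ ω ∂μ, ⟪u, φ ω⟫ = 0) :
    0 < minSqMoment μ φ u := by
  refine (minSqMoment_nonneg u).lt_of_ne fun h => hu ?_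
  have hzero := (integral_eq_zero_iff_of_nonneg (fun _ => minSq_nonneg (abs_nonneg _))
    (integrable_minSq_abs_inner hφ u)).mp h.symm
  filter_upwards [hzero] with ω hω
  by_contra hne
  exact (minSq_pos (abs_pos.mpr hne)).ne' hω

lemma minSq_mul_minSqMoment_le (hφ : MemLp φ 2 μ) {r : ℝ} (hr : 0 ≤ r) (u : E) :
    minSq r * minSqMoment μ φ u ≤ minSqMoment μ φ (r • u) := by
  rw [minSqMoment, ← integral_const_mul]
  refine integral_mono ((integrable_minSq_abs_inner hφ u).const_mul _)
    (integrable_minSq_abs_inner hφ (r • u)) fun ω => ?_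
  simpa only [real_inner_smul_left, abs_mul, abs_of_nonneg hr] using
    minSq_mul_minSq_le hr (abs_nonneg ⟪u, φ ω⟫)

theorem exists_pos_mul_minSq_norm_le_minSqMoment [FiniteDimensional ℝ E] (hφ : MemLp φ 2 μ)
    (hφ_nondeg : ∀ u ≠ 0, ¬ ∀ᵐ ω ∂μ, ⟪u, φ ω⟫ = 0) :
    ∃ lam, 0 < lam ∧ ∀ x : E, lam * minSq ‖x‖ ≤ minSqMoment μ φ x := by
  rcases subsingleton_or_nontrivial E with _ | _
  · refine ⟨1, one_pos, fun x => ?_⟩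
    simpa [Subsingleton.elim x 0, minSq] using minSqMoment_nonneg (μ := μ) (φ := φ) (0 : E)
  obtain ⟨u, hu, hmin⟩ := (isCompact_sphere (0 : E) 1).exists_isMinOn
    (NormedSpace.sphere_nonempty.mpr zero_le_one)
    ((continuousOn_minSqMoment hφ 1).mono Metric.sphere_subset_closedBall)
  have hu0 : u ≠ 0 := ne_zero_of_mem_unit_sphere ⟨u, hu⟩
  refine ⟨minSqMoment μ φ u, minSqMoment_pos hφ (hφ_nondeg u hu0), fun x => ?_⟩
  rcases eq_or_ne x 0 with rfl | hx
  · simpa [minSq] using minSqMoment_nonneg (μ := μ) (φ := φ) (0 : E)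
  have hxS : ‖x‖⁻¹ • x ∈ Metric.sphere (0 : E) 1 := by
    simp [norm_smul, hx]
  calc minSqMoment μ φ u * minSq ‖x‖ ≤ minSq ‖x‖ * minSqMoment μ φ (‖x‖⁻¹ • x) := by
        rw [mul_comm]; exact mul_le_mul_of_nonneg_left (hmin hxS) (minSq_nonneg (norm_nonneg x))
    _ ≤ minSqMoment μ φ (‖x‖ • ‖x‖⁻¹ • x) := minSq_mul_minSqMoment_le hφ (norm_nonneg x) _
    _ = minSqMoment μ φ x := by
        rw [smul_smul, mul_inv_cancel₀ (norm_ne_zero_iff.mpr hx), one_smul]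

end Moment

section SecondMoment

variable {Ω ι : Type*} [MeasurableSpace Ω] {μ : Measure Ω} [Fintype ι]
  {φ : Ω → EuclideanSpace ℝ ι}

noncomputable def secondMoment (μ : Measure Ω) (φ : Ω → EuclideanSpace ℝ ι) : Matrix ι ι ℝ :=
  Matrix.of fun i j => ∫ ω, φ ω i * φ ω j ∂μ

lemma secondMoment_mulVec_eq_zero (hφ : MemLp φ 2 μ) {u : EuclideanSpace ℝ ι}
    (hu : ∀ᵐ ω ∂μ, ⟪u, φ ω⟫ = 0) : secondMoment μ φ *ᵥ WithLp.ofLp u = 0 := by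
  have hcoord (i : ι) : MemLp (fun ω => φ ω i) 2 μ :=
    hφ.continuousLinearMap_comp (EuclideanSpace.proj (𝕜 := ℝ) i)
  funext i
  calc (secondMoment μ φ *ᵥ WithLp.ofLp u) i = ∑ j, ∫ ω, φ ω i * (φ ω j * u j) ∂μ := by
        simp only [secondMoment, Matrix.mulVec, dotProduct, Matrix.of_apply]
        refine Finset.sum_congr rfl fun j _ => ?_
        rw [← integral_mul_const]; congr 1; funext ω; ring
    _ = ∫ ω, φ ω i * ⟪u, φ ω⟫ ∂μ := by
        rw [← integral_finsetSum _ fun j _ => ?_]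
        · simp [PiLp.inner_apply, Finset.mul_sum]
        · simpa only [Pi.mul_apply, mul_assoc] using
            ((hcoord i).integrable_mul (hcoord j)).mul_const (u j)
    _ = 0 := integral_eq_zero_of_ae (by filter_upwards [hu] with ω hω; simp [hω])

lemma not_ae_inner_eq_zero_of_det_ne_zero [DecidableEq ι] (hφ : MemLp φ 2 μ)
    (hdet : (secondMoment μ φ).det ≠ 0) {u : EuclideanSpace ℝ ι} (hu : u ≠ 0) :
    ¬ ∀ᵐ ω ∂μ, ⟪u, φ ω⟫ = 0 := fun h =>
  hdet <| Matrix.exists_mulVec_eq_zero_iff.mp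
    ⟨WithLp.ofLp u, fun h0 => hu (WithLp.ofLp_injective 2 h0), secondMoment_mulVec_eq_zero hφ h⟩

end SecondMoment

theorem stmt_3_general {Ω : Type*} [MeasurableSpace Ω] (μ : Measure Ω)
    (q : ℕ) (φ : Ω → EuclideanSpace ℝ (Fin q))
    (hφ : MemLp φ 2 μ)
    (hSig : (Matrix.of fun i j : Fin q => ∫ ω, φ ω i * φ ω j ∂μ).det ≠ 0) :
    ∃ lam : ℝ, 0 < lam ∧ ∀ x : EuclideanSpace ℝ (Fin q),
      lam * min (‖x‖ ^ 2) ‖x‖ ≤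
        ∫ ω, min (|(inner ℝ x (φ ω) : ℝ)| ^ 2) |(inner ℝ x (φ ω) : ℝ)| ∂μ :=
  exists_pos_mul_minSq_norm_le_minSqMoment hφ fun _ hu =>
    not_ae_inner_eq_zero_of_det_ne_zero hφ hSig hu

theorem stmt_3 {Ω : Type*} [MeasurableSpace Ω] (μ : Measure Ω) [IsProbabilityMeasure μ]
    (q : ℕ) (φ : Ω → EuclideanSpace ℝ (Fin q))
    (hφ : MemLp φ 2 μ)
    (hSig : (Matrix.of fun i j : Fin q => ∫ ω, φ ω i * φ ω j ∂μ).det ≠ 0) :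
    ∃ lam : ℝ, 0 < lam ∧ ∀ x : EuclideanSpace ℝ (Fin q),
      lam * min (‖x‖ ^ 2) ‖x‖ ≤
        ∫ ω, min (|(inner ℝ x (φ ω) : ℝ)| ^ 2) |(inner ℝ x (φ ω) : ℝ)| ∂μ :=
  stmt_3_general μ q φ hφ hSig
end

section
/- Let (ΔM_i)_{i≥1} be a martingale difference sequence with respect to a filtration (F_i), satisfying |ΔM_i| ≤ |Z_i| + E|Z| a.s. where (Z_i) are i.i.d. integrable copies of Z. Then E|∑_{i=1}^n ΔM_i|/n → 0 as n → ∞. -/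
/-!
Clip each increment at a level `K`: `ΔM_i = U_i + V_i` with `|U_i| ≤ K` and
`|V_i| = (|ΔM_i| - K)⁺`. Since `E[ΔM_i | F_{i-1}] = 0`, the sum `∑ ΔM_i` is a.e. the sum of the
recentred parts `U_i - E[U_i | F_{i-1}]` plus that of the `V_i - E[V_i | F_{i-1}]`. The former
are martingale differences bounded by `2K`, hence orthogonal in `L²`, so their sum has `L¹` norm
at most `2K√n`. Each of the latter has `L¹` norm at most `2E(|ΔM_i| - K)⁺ ≤ 2E(|Z| + E|Z| - K)⁺`,
by the domination and identical distribution. Hence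
`E|∑ ΔM_i| / n ≤ 2K/√n + 2E(|Z| + E|Z| - K)⁺`; let `n → ∞`, then `K → ∞`.
-/

open MeasureTheory ProbabilityTheory Filter Topology Finset

def clip (K x : ℝ) : ℝ := max (-K) (min K x)

theorem continuous_clip (K : ℝ) : Continuous (clip K) := by
  unfold clip; fun_prop

theorem abs_clip_le {K : ℝ} (hK : 0 ≤ K) (x : ℝ) : |clip K x| ≤ K :=
  abs_le.2 ⟨le_max_left _ _, max_le (by linarith) (min_le_left _ _)⟩

theorem abs_sub_clip {K : ℝ} (hK : 0 ≤ K) (x : ℝ) : |x - clip K x| = max (|x| - K) 0 := by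
  unfold clip
  grind [abs_of_nonneg, abs_of_nonpos]

theorem tendsto_div_of_le_mul_sqrt_add {a e : ℕ → ℝ} (ha : ∀ n, 0 ≤ a n)
    (he : Tendsto e atTop (𝓝 0)) (hbound : ∀ k, ∃ C, ∀ n, a n ≤ C * √n + n * e k) :
    Tendsto (fun n => a n / n) atTop (𝓝 0) := by
  refine tendsto_order.2 ⟨fun b hb => Eventually.of_forall fun n =>
    hb.trans_le (div_nonneg (ha n) n.cast_nonneg), fun ε hε => ?_⟩
  obtain ⟨k, hk⟩ := (he.eventually (gt_mem_nhds (half_pos hε))).exists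
  obtain ⟨C, hC⟩ := hbound k
  have hlim : Tendsto (fun n : ℕ => C / √n) atTop (𝓝 0) :=
    tendsto_const_nhds.div_atTop <| Real.tendsto_sqrt_atTop.comp tendsto_natCast_atTop_atTop
  filter_upwards [hlim.eventually (gt_mem_nhds (half_pos hε)), eventually_gt_atTop 0]
    with n hn hn0
  have hn0' : (0 : ℝ) < n := by exact_mod_cast hn0
  have hsq : √n * √n = n := Real.mul_self_sqrt hn0'.le
  calc a n / n ≤ (C * √n + n * e k) / n := by gcongr; exact hC n
    _ = C / √n + e k := by field_simp; linear_combination C * hsq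
    _ < ε := by linarith

section

variable {Ω : Type*} {m : MeasurableSpace Ω} {μ : Measure Ω}

theorem integral_abs_le_sqrt_integral_sq [IsProbabilityMeasure μ] {f : Ω → ℝ}
    (hf : MemLp f 2 μ) :
    ∫ ω, |f ω| ∂μ ≤ √(∫ ω, f ω ^ 2 ∂μ) := by
  apply Real.le_sqrt_of_sq_le
  have := variance_nonneg |f| μ
  rw [variance_eq_sub hf.abs] at this
  simpa [sq_abs] using this

theorem integral_abs_sub_condExp_le {m' : MeasurableSpace Ω} {f : Ω → ℝ}
    (hf : Integrable f μ) :
    ∫ ω, |f ω - μ[f | m'] ω| ∂μ ≤ 2 * ∫ ω, |f ω| ∂μ := by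
  calc ∫ ω, |f ω - μ[f | m'] ω| ∂μ ≤ ∫ ω, (|f ω| + |μ[f | m'] ω|) ∂μ :=
        integral_mono (hf.sub integrable_condExp).abs (hf.abs.add integrable_condExp.abs)
          fun ω => abs_sub _ _
    _ = ∫ ω, |f ω| ∂μ + ∫ ω, |μ[f | m'] ω| ∂μ := integral_add hf.abs integrable_condExp.abs
    _ ≤ 2 * ∫ ω, |f ω| ∂μ := by linarith [integral_abs_condExp_le (μ := μ) (m := m') f]

theorem condExp_sub_condExp_ae_eq_zero [IsFiniteMeasure μ] {m' : MeasurableSpace Ω}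
    (hm : m' ≤ m) {f : Ω → ℝ} (hf : Integrable f μ) : μ[f - μ[f | m'] | m'] =ᵐ[μ] 0 := by
  filter_upwards [condExp_sub hf integrable_condExp m'] with ω hω
  rw [hω, condExp_of_stronglyMeasurable hm stronglyMeasurable_condExp integrable_condExp]
  simp

theorem ae_abs_sub_condExp_le {m' : MeasurableSpace Ω} {f : Ω → ℝ} {R : ℝ}
    (hf : ∀ᵐ ω ∂μ, |f ω| ≤ R) : ∀ᵐ ω ∂μ, |f ω - μ[f | m'] ω| ≤ 2 * R := by
  filter_upwards [hf, ae_bdd_abs_condExp_of_ae_bdd_abs (m := m') hf] with ω h1 h2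
  linarith [abs_sub (f ω) (μ[f | m'] ω)]

theorem integral_mul_eq_zero_of_condExp_eq_zero [IsFiniteMeasure μ] {m' : MeasurableSpace Ω}
    (hm : m' ≤ m) {f g : Ω → ℝ} (hf : StronglyMeasurable[m'] f) (hfg : Integrable (f * g) μ)
    (hg : Integrable g μ) (hg0 : μ[g | m'] =ᵐ[μ] 0) : ∫ ω, f ω * g ω ∂μ = 0 := by
  have hfg0 : μ[f * g | m'] =ᵐ[μ] 0 := by
    filter_upwards [condExp_mul_of_stronglyMeasurable_left hf hfg hg, hg0] with ω h1 h2
    simp [h1, h2]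
  change ∫ ω, (f * g) ω ∂μ = 0
  rw [← integral_condExp hm, integral_congr_ae hfg0]
  simp

theorem tendsto_integral_max_sub_natCast {g : Ω → ℝ} (hg : Integrable g μ) :
    Tendsto (fun k : ℕ => ∫ ω, max (g ω - k) 0 ∂μ) atTop (𝓝 0) := by
  have hlim : ∀ ω, Tendsto (fun k : ℕ => max (g ω - k) 0) atTop (𝓝 0) := fun ω =>
    tendsto_const_nhds.congr' <| by
      filter_upwards [eventually_ge_atTop ⌈g ω⌉₊] with k hk
      have : g ω ≤ k := (Nat.le_ceil _).trans (by exact_mod_cast hk)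
      simp [this]
  simpa using tendsto_integral_of_dominated_convergence (fun ω => |g ω|)
    (fun k => ((hg.aemeasurable.sub_const _).max aemeasurable_const).aestronglyMeasurable)
    hg.abs
    (fun k => ae_of_all _ fun ω => by
      rw [Real.norm_eq_abs, abs_of_nonneg (le_max_right _ _)]
      exact max_le (by linarith [le_abs_self (g ω), k.cast_nonneg (α := ℝ)]) (abs_nonneg _))
    (ae_of_all _ hlim)

theorem integral_abs_add_le {f g : Ω → ℝ} (hf : Integrable f μ) (hg : Integrable g μ) :
    ∫ ω, |f ω + g ω| ∂μ ≤ ∫ ω, |f ω| ∂μ + ∫ ω, |g ω| ∂μ := by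
  rw [← integral_add hf.abs hg.abs]
  exact integral_mono (hf.add hg).abs (hf.abs.add hg.abs) fun ω => abs_add_le _ _

theorem integral_abs_sum_le {ι : Type*} (s : Finset ι) {f : ι → Ω → ℝ}
    (hf : ∀ i ∈ s, Integrable (f i) μ) :
    ∫ ω, |∑ i ∈ s, f i ω| ∂μ ≤ ∑ i ∈ s, ∫ ω, |f i ω| ∂μ := by
  rw [← integral_finsetSum _ fun i hi => (hf i hi).abs]
  exact integral_mono (integrable_finsetSum _ hf).abs
    (integrable_finsetSum _ fun i hi => (hf i hi).abs) fun ω => abs_sum_le_sum_abs _ _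

theorem ae_eq_add_sub_condExp_of_condExp_eq_zero {m' : MeasurableSpace Ω} {u v : Ω → ℝ}
    (hu : Integrable u μ) (hv : Integrable v μ) (h0 : μ[u + v | m'] =ᵐ[μ] 0) :
    u + v =ᵐ[μ] (u - μ[u | m']) + (v - μ[v | m']) := by
  filter_upwards [condExp_add hu hv m', h0] with ω h1 h2
  simp only [Pi.add_apply, Pi.sub_apply, Pi.zero_apply] at h1 h2 ⊢
  linarith

end

section MartingaleDifference

variable {Ω : Type*} {m : MeasurableSpace Ω} {μ : Measure Ω} [IsProbabilityMeasure μ]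
  {ℱ : Filtration ℕ m} {D : ℕ → Ω → ℝ}

theorem integral_sq_sum_eq_sum_integral_sq (hD : ∀ i, StronglyMeasurable[ℱ (i + 1)] (D i))
    (hL2 : ∀ i, MemLp (D i) 2 μ) (hD0 : ∀ i, μ[D i | ℱ i] =ᵐ[μ] 0) (n : ℕ) :
    ∫ ω, (∑ i ∈ range n, D i ω) ^ 2 ∂μ = ∑ i ∈ range n, ∫ ω, D i ω ^ 2 ∂μ := by
  have hprod (i j : ℕ) : Integrable (fun ω => D i ω * D j ω) μ := (hL2 i).integrable_mul (hL2 j)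
  have horth (i j : ℕ) (hij : i ≠ j) : ∫ ω, D i ω * D j ω ∂μ = 0 := by
    rcases hij.lt_or_gt with hij | hij
    · exact integral_mul_eq_zero_of_condExp_eq_zero (ℱ.le j) ((hD i).mono (ℱ.mono hij))
        (hprod i j) ((hL2 j).integrable one_le_two) (hD0 j)
    · simp_rw [mul_comm (D i _)]
      exact integral_mul_eq_zero_of_condExp_eq_zero (ℱ.le i) ((hD j).mono (ℱ.mono hij))
        (hprod j i) ((hL2 i).integrable one_le_two) (hD0 i)
  simp_rw [sq, sum_mul_sum]
  rw [integral_finsetSum _ fun i _ => integrable_finsetSum _ fun j _ => hprod i j]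
  refine sum_congr rfl fun i hi => ?_
  rw [integral_finsetSum _ fun j _ => hprod i j,
    sum_eq_single i (fun j _ hji => horth i j hji.symm) (fun hi' => absurd hi hi')]

theorem integral_abs_sum_le_mul_sqrt {C : ℝ}
    (hD : ∀ i, StronglyMeasurable[ℱ (i + 1)] (D i)) (hbdd : ∀ i, ∀ᵐ ω ∂μ, |D i ω| ≤ C)
    (hD0 : ∀ i, μ[D i | ℱ i] =ᵐ[μ] 0) (n : ℕ) :
    ∫ ω, |∑ i ∈ range n, D i ω| ∂μ ≤ C * √n := by
  have hL2 (i : ℕ) : MemLp (D i) 2 μ :=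
    MemLp.of_bound ((hD i).mono (ℱ.le _)).aestronglyMeasurable C (hbdd i)
  have hC : 0 ≤ C := (abs_nonneg _).trans (hbdd 0).exists.choose_spec
  calc ∫ ω, |∑ i ∈ range n, D i ω| ∂μ ≤ √(∫ ω, (∑ i ∈ range n, D i ω) ^ 2 ∂μ) :=
        integral_abs_le_sqrt_integral_sq (memLp_finsetSum _ fun i _ => hL2 i)
    _ = √(∑ i ∈ range n, ∫ ω, D i ω ^ 2 ∂μ) := by
        rw [integral_sq_sum_eq_sum_integral_sq hD hL2 hD0]
    _ ≤ √(∑ _i ∈ range n, C ^ 2) := by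
        gcongr with i
        calc ∫ ω, D i ω ^ 2 ∂μ ≤ ∫ _ω, C ^ 2 ∂μ := by
              refine integral_mono_of_nonneg (ae_of_all _ fun _ => sq_nonneg _)
                (integrable_const _) ?_
              filter_upwards [hbdd i] with ω hω
              exact sq_le_sq' (abs_le.1 hω).1 (abs_le.1 hω).2
          _ = C ^ 2 := by simp
    _ = C * √n := by
        rw [sum_const, card_range, nsmul_eq_mul, Real.sqrt_mul' _ (sq_nonneg C), Real.sqrt_sq hC,
          mul_comm]

theorem integral_abs_sum_le_sqrt_add_tail (hD : ∀ i, StronglyMeasurable[ℱ (i + 1)] (D i))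
    (hint : ∀ i, Integrable (D i) μ) (hD0 : ∀ i, μ[D i | ℱ i] =ᵐ[μ] 0) {K : ℝ} (hK : 0 ≤ K)
    (n : ℕ) :
    ∫ ω, |∑ i ∈ range n, D i ω| ∂μ ≤
      2 * K * √n + 2 * ∑ i ∈ range n, ∫ ω, max (|D i ω| - K) 0 ∂μ := by
  set U : ℕ → Ω → ℝ := fun i ω => clip K (D i ω)
  set V : ℕ → Ω → ℝ := fun i => D i - U i
  have hUm (i : ℕ) : StronglyMeasurable[ℱ (i + 1)] (U i) :=
    (continuous_clip K).comp_stronglyMeasurable (hD i)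
  have hUbdd (i : ℕ) : ∀ᵐ ω ∂μ, |U i ω| ≤ K := ae_of_all _ fun ω => abs_clip_le hK _
  have hUint (i : ℕ) : Integrable (U i) μ :=
    Integrable.of_bound ((hUm i).mono (ℱ.le _)).aestronglyMeasurable K (hUbdd i)
  have hVint (i : ℕ) : Integrable (V i) μ := (hint i).sub (hUint i)
  set U' : ℕ → Ω → ℝ := fun i => U i - μ[U i | ℱ i]
  set V' : ℕ → Ω → ℝ := fun i => V i - μ[V i | ℱ i]
  have hsplit : ∀ᵐ ω ∂μ, ∀ i, D i ω = U' i ω + V' i ω := by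
    refine ae_all_iff.2 fun i => ?_
    have hUV : U i + V i = D i := add_sub_cancel _ _
    exact hUV ▸ ae_eq_add_sub_condExp_of_condExp_eq_zero (hUint i) (hVint i) (hUV ▸ hD0 i)
  have hU'int : Integrable (fun ω => ∑ i ∈ range n, U' i ω) μ :=
    integrable_finsetSum _ fun i _ => (hUint i).sub integrable_condExp
  have hV'int : Integrable (fun ω => ∑ i ∈ range n, V' i ω) μ :=
    integrable_finsetSum _ fun i _ => (hVint i).sub integrable_condExp
  have hU' : ∫ ω, |∑ i ∈ range n, U' i ω| ∂μ ≤ 2 * K * √n :=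
    integral_abs_sum_le_mul_sqrt
      (fun i => (hUm i).sub (stronglyMeasurable_condExp.mono (ℱ.mono (Nat.le_succ i))))
      (fun i => ae_abs_sub_condExp_le (hUbdd i))
      (fun i => condExp_sub_condExp_ae_eq_zero (ℱ.le i) (hUint i)) n
  have hV' : ∫ ω, |∑ i ∈ range n, V' i ω| ∂μ ≤
      2 * ∑ i ∈ range n, ∫ ω, max (|D i ω| - K) 0 ∂μ :=
    calc ∫ ω, |∑ i ∈ range n, V' i ω| ∂μ ≤ ∑ i ∈ range n, ∫ ω, |V' i ω| ∂μ :=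
          integral_abs_sum_le _ fun i _ => (hVint i).sub integrable_condExp
      _ ≤ ∑ i ∈ range n, 2 * ∫ ω, |V i ω| ∂μ :=
          sum_le_sum fun i _ => integral_abs_sub_condExp_le (hVint i)
      _ = 2 * ∑ i ∈ range n, ∫ ω, max (|D i ω| - K) 0 ∂μ := by
          simp only [← mul_sum, V, U, Pi.sub_apply, abs_sub_clip hK]
  calc ∫ ω, |∑ i ∈ range n, D i ω| ∂μ
      = ∫ ω, |∑ i ∈ range n, U' i ω + ∑ i ∈ range n, V' i ω| ∂μ :=
        integral_congr_ae <| hsplit.mono fun ω h => by simp only [h, sum_add_distrib]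
    _ ≤ ∫ ω, |∑ i ∈ range n, U' i ω| ∂μ + ∫ ω, |∑ i ∈ range n, V' i ω| ∂μ :=
        integral_abs_add_le hU'int hV'int
    _ ≤ _ := add_le_add hU' hV'

theorem tendsto_integral_abs_sum_div_of_tail_le
    (hD : ∀ i, StronglyMeasurable[ℱ (i + 1)] (D i))
    (hint : ∀ i, Integrable (D i) μ) (hD0 : ∀ i, μ[D i | ℱ i] =ᵐ[μ] 0) {e : ℕ → ℝ}
    (he : Tendsto e atTop (𝓝 0)) (htail : ∀ (k : ℕ) i, ∫ ω, max (|D i ω| - k) 0 ∂μ ≤ e k) :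
    Tendsto (fun n : ℕ => (∫ ω, |∑ i ∈ range n, D i ω| ∂μ) / n) atTop (𝓝 0) := by
  refine tendsto_div_of_le_mul_sqrt_add (fun n => integral_nonneg fun _ => abs_nonneg _)
    (by simpa using he.const_mul 2) fun k => ⟨2 * k, fun n => ?_⟩
  calc ∫ ω, |∑ i ∈ range n, D i ω| ∂μ
      ≤ 2 * k * √n + 2 * ∑ i ∈ range n, ∫ ω, max (|D i ω| - k) 0 ∂μ :=
        integral_abs_sum_le_sqrt_add_tail hD hint hD0 k.cast_nonneg n
    _ ≤ 2 * k * √n + 2 * ∑ _i ∈ range n, e k := by gcongr with i; exact htail k i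
    _ = 2 * k * √n + n * (2 * e k) := by rw [sum_const, card_range, nsmul_eq_mul]; ring

end MartingaleDifference

theorem stmt_12_general {Ω : Type*} {m : MeasurableSpace Ω} (μ : Measure Ω) [IsProbabilityMeasure μ]
    (ℱ : Filtration ℕ m)
    (ΔM : ℕ → Ω → ℝ) (Z : ℕ → Ω → ℝ)
    (hadp : Adapted ℱ ΔM)
    (hint : ∀ i, Integrable (ΔM i) μ)
    (hmds : ∀ i, μ[ΔM (i + 1) | ℱ i] =ᵐ[μ] 0)
    (hZid : ∀ i, IdentDistrib (Z i) (Z 0) μ μ)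
    (hZint : Integrable (Z 0) μ)
    (hdom : ∀ i, ∀ᵐ ω ∂μ, |ΔM (i + 1) ω| ≤ |Z (i + 1) ω| + ∫ ω', |Z 0 ω'| ∂μ) :
    Tendsto (fun n : ℕ =>
        (∫ ω, |∑ i ∈ Finset.range n, ΔM (i + 1) ω| ∂μ) / n) atTop (nhds 0) := by
  set c := ∫ ω', |Z 0 ω'| ∂μ
  refine tendsto_integral_abs_sum_div_of_tail_le (ℱ := ℱ)
    (fun i => (hadp (i + 1)).stronglyMeasurable) (fun i => hint (i + 1)) hmds
    (tendsto_integral_max_sub_natCast (hZint.abs.add (integrable_const c))) fun k i => ?_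
  have hg : Measurable fun x : ℝ => max (|x| + c - k) 0 := by fun_prop
  have hZi : Integrable (Z (i + 1)) μ := (hZid (i + 1)).integrable_iff.2 hZint
  calc ∫ ω, max (|ΔM (i + 1) ω| - k) 0 ∂μ ≤ ∫ ω, max (|Z (i + 1) ω| + c - k) 0 ∂μ := by
        refine integral_mono_of_nonneg (ae_of_all _ fun _ => le_max_right _ _)
          ((hZi.abs.add (integrable_const c)).sub (integrable_const _)).pos_part ?_
        filter_upwards [hdom i] with ω hω
        exact max_le_max (by linarith) le_rfl
    _ = ∫ ω, max (|Z 0 ω| + c - k) 0 ∂μ := ((hZid (i + 1)).comp hg).integral_eq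

theorem stmt_12 {Ω : Type*} {m : MeasurableSpace Ω} (μ : Measure Ω) [IsProbabilityMeasure μ]
    (ℱ : Filtration ℕ m)
    (ΔM : ℕ → Ω → ℝ) (Z : ℕ → Ω → ℝ)
    (hadp : Adapted ℱ ΔM)
    (hint : ∀ i, Integrable (ΔM i) μ)
    (hmds : ∀ i, μ[ΔM (i + 1) | ℱ i] =ᵐ[μ] 0)
    (hZiid : iIndepFun Z μ)
    (hZid : ∀ i, IdentDistrib (Z i) (Z 0) μ μ)
    (hZint : Integrable (Z 0) μ)
    (hdom : ∀ i, ∀ᵐ ω ∂μ, |ΔM (i + 1) ω| ≤ |Z (i + 1) ω| + ∫ ω', |Z 0 ω'| ∂μ) :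
    Tendsto (fun n : ℕ =>
        (∫ ω, |∑ i ∈ Finset.range n, ΔM (i + 1) ω| ∂μ) / n) atTop (nhds 0) :=
  stmt_12_general μ ℱ ΔM Z hadp hint hmds hZid hZint hdom
end
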